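/- Let k₁, k₂ be real constants and suppose y : I → ℝ is three times differentiable and positive on an open interval I, and satisfies y'''(x) = 3 y'(x)·y''(x)/y(x) − (16/9)·(y'(x))³/y(x)² + (k₁ x + k₂)·y'(x) + k₂·y(x) for all x ∈ I. Then the function w(x) = y'(x)/(3 y(x)) satisfies the second Painlevé-type equation w''(x) = 2 w(x)³ + (k₁ x + k₂)·w(x) + k₂/3 for all x ∈ I. -/
import Mathlib


/-- Reduction of Mugan–Jrad's equation 4.6 to a second Painlevé-type equation:
if `y` is positive and solves
`y''' = 3y'y''/y − (16/9)(y')³/y² + (k₁x + k₂)y' + k₂y` on an open interval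
`I`, then `w = y'/(3y)` satisfies `w'' = 2w³ + (k₁x + k₂)w + k₂/3` on `I`. -/
theorem stmt_11 (k₁ k₂ : ℝ) (I : Set ℝ) (hIopen : IsOpen I)
    (hIinterval : I.OrdConnected) (y : ℝ → ℝ)
    (hd1 : ∀ x ∈ I, DifferentiableAt ℝ y x)
    (hd2 : ∀ x ∈ I, DifferentiableAt ℝ (deriv y) x)
    (hd3 : ∀ x ∈ I, DifferentiableAt ℝ (deriv (deriv y)) x)
    (hpos : ∀ x ∈ I, 0 < y x)
    (hode : ∀ x ∈ I, deriv (deriv (deriv y)) x =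
      3 * deriv y x * deriv (deriv y) x / y x -
      (16 / 9) * (deriv y x) ^ 3 / (y x) ^ 2 + (k₁ * x + k₂) * deriv y x +
      k₂ * y x)
    (w : ℝ → ℝ) (hw : ∀ x : ℝ, w x = deriv y x / (3 * y x)) :
    ∀ x ∈ I, deriv (deriv w) x =
      2 * (w x) ^ 3 + (k₁ * x + k₂) * w x + k₂ / 3 := by
  have hwf : w = fun t => deriv y t / (3 * y t) := funext hw
  set F : ℝ → ℝ := fun t =>
    (deriv (deriv y) t * (3 * y t) - deriv y t * (3 * deriv y t)) / (3 * y t) ^ 2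
    with hF
  have hW : ∀ t ∈ I, HasDerivAt w
      ((deriv (deriv y) t * (3 * y t) - deriv y t * (3 * deriv y t)) / (3 * y t) ^ 2) t := by
    intro t ht
    rw [hwf]
    have hne : 3 * y t ≠ 0 := by simpa using (hpos t ht).ne'
    exact (hd2 t ht).hasDerivAt.div ((hd1 t ht).hasDerivAt.const_mul 3) hne
  intro x hx
  have hyx : y x ≠ 0 := (hpos x hx).ne'
  have heq : deriv w =ᶠ[nhds x] F := by
    filter_upwards [hIopen.mem_nhds hx] with t ht
    exact (hW t ht).deriv
  have hy : HasDerivAt y (deriv y x) x := (hd1 x hx).hasDerivAt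
  have hy2 : HasDerivAt (deriv y) (deriv (deriv y) x) x := (hd2 x hx).hasDerivAt
  have hy3 : HasDerivAt (deriv (deriv y)) (deriv (deriv (deriv y)) x) x := (hd3 x hx).hasDerivAt
  have hN : HasDerivAt (fun t => deriv (deriv y) t * (3 * y t) - deriv y t * (3 * deriv y t))
      ((deriv (deriv (deriv y)) x * (3 * y x) + deriv (deriv y) x * (3 * deriv y x)) -
       (deriv (deriv y) x * (3 * deriv y x) + deriv y x * (3 * deriv (deriv y) x))) x :=
    (hy3.mul (hy.const_mul 3)).sub (hy2.mul (hy2.const_mul 3))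
  have hD : HasDerivAt (fun t => (3 * y t) ^ 2) (2 * (3 * y x) ^ 1 * (3 * deriv y x)) x :=
    (hy.const_mul 3).pow 2
  have hDne : (3 * y x) ^ 2 ≠ 0 := pow_ne_zero 2 (by simpa using (hpos x hx).ne')
  have hFd : HasDerivAt F
      ((((deriv (deriv (deriv y)) x * (3 * y x) + deriv (deriv y) x * (3 * deriv y x)) -
       (deriv (deriv y) x * (3 * deriv y x) + deriv y x * (3 * deriv (deriv y) x))) * (3 * y x) ^ 2
       - (deriv (deriv y) x * (3 * y x) - deriv y x * (3 * deriv y x)) *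
         (2 * (3 * y x) ^ 1 * (3 * deriv y x))) / ((3 * y x) ^ 2) ^ 2) x :=
    hN.div hD hDne
  rw [heq.deriv_eq, hFd.deriv, hw x, hode x hx]
  field_simp
  ring
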